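/- arXiv:1705.09491 — 5 statements merged into one kernel-verified Lean document; each statement's English description precedes it below -/
import Mathlib

section
/- (Quasi-factorization of excitations) Let P_A, P_B, P be orthogonal projections on a Hilbert space H with P_A P = P P_A = P and P_B P = P P_B = P, and let δ = ‖(P_A - P)(P_B - P)‖. Then for every vector φ ∈ H, (1 - 2δ)·⟨φ, (1-P)φ⟩ ≤ ⟨φ, (1-P_A)φ⟩ + ⟨φ, (1-P_B)φ⟩. -/
open scoped InnerProductSpace
open RCLike

private lemma proj_re_inner' {H : Type*} [NormedAddCommGroup H] [InnerProductSpace ℂ H]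
    [CompleteSpace H] (Q : H →L[ℂ] H) (hQ : IsSelfAdjoint Q) (hidem : Q * Q = Q) (x : H) :
    re (⟪Q x, x⟫_ℂ) = ‖Q x‖ ^ 2 := by
  have hsym := ContinuousLinearMap.isSelfAdjoint_iff_isSymmetric.mp hQ
  have h1 : Q (Q x) = Q x := by rw [← ContinuousLinearMap.mul_apply, hidem]
  have h2 : ⟪Q x, x⟫_ℂ = ⟪Q x, Q x⟫_ℂ := by
    conv_lhs => rw [← h1]
    exact hsym (Q x) x
  rw [h2, inner_self_eq_norm_sq]

private lemma arith_key (s t d : ℝ) (hs : 0 ≤ s) (ht : 0 ≤ t) (hd : 0 ≤ d)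
    (h : s ^ 2 ≤ t * (s + 2 * (d * t))) : s ≤ (1 + 2 * d) * t := by
  nlinarith [sq_nonneg (s - t), mul_nonneg ht hd, mul_nonneg (mul_nonneg ht hd) ht,
    mul_nonneg hs ht, sq_nonneg (s - (1 + 2 * d) * t)]

set_option maxHeartbeats 1600000 in
/-- Quasi-factorization of excitations: with frustration-free projections
`P_A, P_B, P` and `δ = ‖(P_A - P)(P_B - P)‖`, for every `φ`,
`(1 - 2δ)⟨φ,(1-P)φ⟩ ≤ ⟨φ,(1-P_A)φ⟩ + ⟨φ,(1-P_B)φ⟩`. -/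
theorem stmt_3 {H : Type*} [NormedAddCommGroup H] [InnerProductSpace ℂ H] [CompleteSpace H]
    (PA PB P : H →L[ℂ] H)
    (hPA : IsSelfAdjoint PA) (hPAidem : PA * PA = PA)
    (hPB : IsSelfAdjoint PB) (hPBidem : PB * PB = PB)
    (hP : IsSelfAdjoint P) (hPidem : P * P = P)
    (hA1 : PA * P = P) (hA2 : P * PA = P) (hB1 : PB * P = P) (hB2 : P * PB = P)
    (δ : ℝ) (hδ : δ = ‖(PA - P) * (PB - P)‖) (φ : H) :
    (1 - 2 * δ) * ((1 - P).reApplyInnerSelf φ) ≤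
      (1 - PA).reApplyInnerSelf φ + (1 - PB).reApplyInnerSelf φ := by
  have hδ0 : 0 ≤ δ := hδ ▸ norm_nonneg _
  have hQAsa : IsSelfAdjoint (PA - P) := hPA.sub hP
  have hQBsa : IsSelfAdjoint (PB - P) := hPB.sub hP
  have hQAidem : (PA - P) * (PA - P) = PA - P := by
    simp only [sub_mul, mul_sub, hPAidem, hPidem, hA1, hA2]
    abel
  have hQBidem : (PB - P) * (PB - P) = PB - P := by
    simp only [sub_mul, mul_sub, hPBidem, hPidem, hB1, hB2]
    abel
  have hone : IsSelfAdjoint (1 : H →L[ℂ] H) := by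
    simp [IsSelfAdjoint]
  have hQsa : IsSelfAdjoint ((1 : H →L[ℂ] H) - P) := hone.sub hP
  have hQidem : ((1 : H →L[ℂ] H) - P) * (1 - P) = 1 - P := by
    simp only [sub_mul, mul_sub, hPidem, one_mul, mul_one]
    abel
  set ψ : H := ((1 : H →L[ℂ] H) - P) φ with hψdef
  -- (PA - P) ψ = (PA - P) φ, same for B
  have hQAP : (PA - P) * ((1 : H →L[ℂ] H) - P) = PA - P := by
    simp only [mul_sub, mul_one, sub_mul, hA1, hPidem, one_mul]
    abel
  have hQBP : (PB - P) * ((1 : H →L[ℂ] H) - P) = PB - P := by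
    simp only [mul_sub, mul_one, sub_mul, hB1, hPidem, one_mul]
    abel
  have hQAψ : (PA - P) ψ = (PA - P) φ := by
    rw [hψdef, ← ContinuousLinearMap.mul_apply, hQAP]
  have hQBψ : (PB - P) ψ = (PB - P) φ := by
    rw [hψdef, ← ContinuousLinearMap.mul_apply, hQBP]
  have hsymQA := ContinuousLinearMap.isSelfAdjoint_iff_isSymmetric.mp hQAsa
  have hreA : re ⟪(PA - P) ψ, ψ⟫_ℂ = ‖(PA - P) ψ‖ ^ 2 := proj_re_inner' _ hQAsa hQAidem ψ
  have hreB : re ⟪(PB - P) ψ, ψ⟫_ℂ = ‖(PB - P) ψ‖ ^ 2 := proj_re_inner' _ hQBsa hQBidem ψ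
  have f1 : ‖(PA - P) ψ‖ ^ 2 + ‖(PB - P) ψ‖ ^ 2 = re ⟪(PA - P) ψ + (PB - P) ψ, ψ⟫_ℂ := by
    rw [inner_add_left, map_add, hreA, hreB]
  have f2 : re ⟪(PA - P) ψ + (PB - P) ψ, ψ⟫_ℂ ≤ ‖(PA - P) ψ + (PB - P) ψ‖ * ‖ψ‖ :=
    re_inner_le_norm _ _
  have f3 : ‖(PA - P) ψ + (PB - P) ψ‖ ^ 2 =
      ‖(PA - P) ψ‖ ^ 2 + 2 * re ⟪(PA - P) ψ, (PB - P) ψ⟫_ℂ + ‖(PB - P) ψ‖ ^ 2 :=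
    norm_add_sq _ _
  have f4 : re ⟪(PA - P) ψ, (PB - P) ψ⟫_ℂ ≤ δ * ‖ψ‖ ^ 2 := by
    have h1 : ⟪(PA - P) ψ, (PB - P) ψ⟫_ℂ = ⟪ψ, ((PA - P) * (PB - P)) ψ⟫_ℂ := by
      rw [ContinuousLinearMap.mul_apply]
      exact hsymQA ψ ((PB - P) ψ)
    have h3 : ‖((PA - P) * (PB - P)) ψ‖ ≤ δ * ‖ψ‖ := by
      rw [hδ]
      exact ((PA - P) * (PB - P)).le_opNorm ψ
    calc re ⟪(PA - P) ψ, (PB - P) ψ⟫_ℂ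
        ≤ ‖⟪(PA - P) ψ, (PB - P) ψ⟫_ℂ‖ := re_le_norm _
      _ = ‖⟪ψ, ((PA - P) * (PB - P)) ψ⟫_ℂ‖ := by rw [h1]
      _ ≤ ‖ψ‖ * ‖((PA - P) * (PB - P)) ψ‖ := norm_inner_le_norm _ _
      _ ≤ ‖ψ‖ * (δ * ‖ψ‖) := mul_le_mul_of_nonneg_left h3 (norm_nonneg _)
      _ = δ * ‖ψ‖ ^ 2 := by ring
  have key : ‖(PA - P) ψ‖ ^ 2 + ‖(PB - P) ψ‖ ^ 2 ≤ (1 + 2 * δ) * ‖ψ‖ ^ 2 := by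
    have hs0 : (0:ℝ) ≤ ‖(PA - P) ψ‖ ^ 2 + ‖(PB - P) ψ‖ ^ 2 := by positivity
    have ht0 : (0:ℝ) ≤ ‖ψ‖ ^ 2 := by positivity
    refine arith_key _ _ _ hs0 ht0 hδ0 ?_
    have h1 : (‖(PA - P) ψ‖ ^ 2 + ‖(PB - P) ψ‖ ^ 2) ^ 2 ≤
        (‖(PA - P) ψ + (PB - P) ψ‖ * ‖ψ‖) ^ 2 := by
      have hf := f1 ▸ f2
      nlinarith [norm_nonneg ((PA - P) ψ + (PB - P) ψ), norm_nonneg ψ, f1, f2, hs0]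
    nlinarith [h1, f3, f4, ht0, norm_nonneg ψ]
  -- now compute the reApplyInnerSelf expressions
  simp only [ContinuousLinearMap.reApplyInnerSelf]
  have e0 : re ⟪((1 : H →L[ℂ] H) - P) φ, φ⟫_ℂ = ‖ψ‖ ^ 2 := by
    have h := proj_re_inner' _ hQsa hQidem φ
    rw [← hψdef] at h
    exact h
  have e1 : re ⟪((1 : H →L[ℂ] H) - PA) φ, φ⟫_ℂ = ‖ψ‖ ^ 2 - ‖(PA - P) ψ‖ ^ 2 := by
    have hsplit : ((1 : H →L[ℂ] H) - PA) φ = ((1 : H →L[ℂ] H) - P) φ - (PA - P) φ := by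
      simp only [ContinuousLinearMap.sub_apply, ContinuousLinearMap.one_apply]
      abel
    have hra : re ⟪(PA - P) φ, φ⟫_ℂ = ‖(PA - P) ψ‖ ^ 2 := by
      have h := proj_re_inner' _ hQAsa hQAidem φ
      rw [h, hQAψ]
    rw [hsplit, inner_sub_left, map_sub, e0, hra]
  have e2 : re ⟪((1 : H →L[ℂ] H) - PB) φ, φ⟫_ℂ = ‖ψ‖ ^ 2 - ‖(PB - P) ψ‖ ^ 2 := by
    have hsplit : ((1 : H →L[ℂ] H) - PB) φ = ((1 : H →L[ℂ] H) - P) φ - (PB - P) φ := by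
      simp only [ContinuousLinearMap.sub_apply, ContinuousLinearMap.one_apply]
      abel
    have hrb : re ⟪(PB - P) φ, φ⟫_ℂ = ‖(PB - P) ψ‖ ^ 2 := by
      have h := proj_re_inner' _ hQBsa hQBidem φ
      rw [h, hQBψ]
    rw [hsplit, inner_sub_left, map_sub, e0, hrb]
  rw [e0, e1, e2]
  nlinarith [key, sq_nonneg ‖ψ‖]
end

section
/- Let P_A, P_B, P be orthogonal projections on H with P_A P = P P_A = P and P_B P = P P_B = P, and suppose ‖φ‖² - ‖P_A P_B φ‖² ≤ 4(⟨φ,(1-P_A)φ⟩ + ⟨φ,(1-P_B)φ⟩) for all φ. Then with δ = ‖(P_A - P)(P_B - P)‖, for all φ it holds that (1-δ)/4 · ⟨φ, (1-P)φ⟩ ≤ ⟨φ, (1-P_A)φ⟩ + ⟨φ, (1-P_B)φ⟩. -/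
/-!
Put `ψ = (1 - P) φ`. Since `P ≤ P_A` and `P ≤ P_B`, the two local energies take the same value
at `ψ` as at `φ`. On the other hand `P_A P_B (1 - P) = (P_A - P)(P_B - P)(1 - P)`, so
`‖P_A P_B ψ‖ ≤ δ ‖ψ‖`, and the hypothesis applied to `ψ` gives
`(1 - δ²) ‖ψ‖² ≤ 4 (⟨φ,(1-P_A)φ⟩ + ⟨φ,(1-P_B)φ⟩)`. As `‖ψ‖² = ⟨φ,(1-P)φ⟩` and `1 - δ ≤ 1 - δ²`
for `δ ∈ [0, 1]` (while for `δ > 1` there is nothing to prove), the claim follows.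
-/

open ContinuousLinearMap

section Ring

variable {R : Type*} [Ring R] {a b p : R}

theorem one_sub_mul_one_sub_of_mul_eq_right (h : a * p = p) : (1 - a) * (1 - p) = 1 - a := by
  noncomm_ring [h]

theorem mul_mul_one_sub_eq_sub_mul_sub_mul_one_sub (ha : a * p = p) (hb : p * b = p)
    (hp : p * p = p) : a * b * (1 - p) = (a - p) * (b - p) * (1 - p) := by
  noncomm_ring [ha, hb, hp]

end Ring

theorem norm_mul_apply_one_sub_apply_le {𝕜 E : Type*} [NontriviallyNormedField 𝕜]
    [NormedAddCommGroup E] [NormedSpace 𝕜 E] {a b p : E →L[𝕜] E}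
    (ha : a * p = p) (hb : p * b = p) (hp : p * p = p) (x : E) :
    ‖(a * b) ((1 - p) x)‖ ≤ ‖(a - p) * (b - p)‖ * ‖(1 - p) x‖ := by
  calc ‖(a * b) ((1 - p) x)‖ = ‖((a - p) * (b - p)) ((1 - p) x)‖ := by
        rw [← mul_apply_eq_comp, mul_mul_one_sub_eq_sub_mul_sub_mul_one_sub ha hb hp,
          mul_apply_eq_comp]
    _ ≤ ‖(a - p) * (b - p)‖ * ‖(1 - p) x‖ := le_opNorm _ _

section InnerProductSpace

variable {𝕜 E : Type*} [RCLike 𝕜] [NormedAddCommGroup E] [InnerProductSpace 𝕜 E] [CompleteSpace E]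

theorem IsStarProjection.reApplyInnerSelf_eq_norm_sq {p : E →L[𝕜] E} (hp : IsStarProjection p)
    (x : E) : p.reApplyInnerSelf x = ‖p x‖ ^ 2 := by
  rw [apply_norm_sq_eq_inner_adjoint_left, hp.isSelfAdjoint.adjoint_eq, ← mul_def,
    hp.isIdempotentElem.eq, reApplyInnerSelf]

theorem IsStarProjection.reApplyInnerSelf_one_sub_apply_one_sub {q p : E →L[𝕜] E}
    (hq : IsStarProjection q) (hqp : q * p = p) (x : E) :
    (1 - q).reApplyInnerSelf ((1 - p) x) = (1 - q).reApplyInnerSelf x := by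
  rw [hq.one_sub.reApplyInnerSelf_eq_norm_sq, hq.one_sub.reApplyInnerSelf_eq_norm_sq,
    ← mul_apply_eq_comp, one_sub_mul_one_sub_of_mul_eq_right hqp]

end InnerProductSpace

theorem one_sub_div_four_mul_le_of_one_sub_sq_mul_le {δ t e : ℝ} (hδ : 0 ≤ δ) (ht : 0 ≤ t)
    (he : 0 ≤ e) (h : (1 - δ ^ 2) * t ≤ 4 * e) : (1 - δ) / 4 * t ≤ e := by
  rcases le_total δ 1 with hδ1 | hδ1
  · nlinarith [mul_nonneg (mul_nonneg hδ (sub_nonneg.2 hδ1)) ht]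
  · nlinarith [mul_nonneg (sub_nonneg.2 hδ1) ht]

theorem stmt_4_general {H : Type*} [NormedAddCommGroup H] [InnerProductSpace ℂ H] [CompleteSpace H]
    (PA PB P : H →L[ℂ] H)
    (hPA : IsSelfAdjoint PA) (hPAidem : PA * PA = PA)
    (hPB : IsSelfAdjoint PB) (hPBidem : PB * PB = PB)
    (hP : IsSelfAdjoint P) (hPidem : P * P = P)
    (hA1 : PA * P = P) (hB1 : PB * P = P) (hB2 : P * PB = P)
    (hconv : ∀ φ : H, ‖φ‖ ^ 2 - ‖(PA * PB) φ‖ ^ 2 ≤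
      4 * ((1 - PA).reApplyInnerSelf φ + (1 - PB).reApplyInnerSelf φ))
    (δ : ℝ) (hδ : δ = ‖(PA - P) * (PB - P)‖) :
    ∀ φ : H, (1 - δ) / 4 * ((1 - P).reApplyInnerSelf φ) ≤
      (1 - PA).reApplyInnerSelf φ + (1 - PB).reApplyInnerSelf φ := by
  intro φ
  have hPA' : IsStarProjection PA := ⟨hPAidem, hPA⟩
  have hPB' : IsStarProjection PB := ⟨hPBidem, hPB⟩
  have hP' : IsStarProjection P := ⟨hPidem, hP⟩
  have hδ0 : 0 ≤ δ := hδ ▸ norm_nonneg _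
  have hgap : ‖(PA * PB) ((1 - P) φ)‖ ^ 2 ≤ δ ^ 2 * ‖(1 - P) φ‖ ^ 2 := by
    rw [← mul_pow, hδ]
    exact pow_le_pow_left₀ (norm_nonneg _) (norm_mul_apply_one_sub_apply_le hA1 hB2 hPidem φ) 2
  have hconvψ := hconv ((1 - P) φ)
  rw [hPA'.reApplyInnerSelf_one_sub_apply_one_sub hA1,
    hPB'.reApplyInnerSelf_one_sub_apply_one_sub hB1] at hconvψ
  rw [hP'.one_sub.reApplyInnerSelf_eq_norm_sq]
  refine one_sub_div_four_mul_le_of_one_sub_sq_mul_le hδ0 (sq_nonneg _) ?_ (by linarith)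
  rw [hPA'.one_sub.reApplyInnerSelf_eq_norm_sq, hPB'.one_sub.reApplyInnerSelf_eq_norm_sq]
  positivity

/-- Under frustration freeness and the converse-detectability inequality
`‖φ‖² - ‖P_A P_B φ‖² ≤ 4(⟨φ,(1-P_A)φ⟩ + ⟨φ,(1-P_B)φ⟩)`, with `δ = ‖(P_A-P)(P_B-P)‖`,
one has `(1-δ)/4 ⟨φ,(1-P)φ⟩ ≤ ⟨φ,(1-P_A)φ⟩ + ⟨φ,(1-P_B)φ⟩` for all `φ`. -/
theorem stmt_4 {H : Type*} [NormedAddCommGroup H] [InnerProductSpace ℂ H] [CompleteSpace H]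
    (PA PB P : H →L[ℂ] H)
    (hPA : IsSelfAdjoint PA) (hPAidem : PA * PA = PA)
    (hPB : IsSelfAdjoint PB) (hPBidem : PB * PB = PB)
    (hP : IsSelfAdjoint P) (hPidem : P * P = P)
    (hA1 : PA * P = P) (hA2 : P * PA = P) (hB1 : PB * P = P) (hB2 : P * PB = P)
    (hconv : ∀ φ : H, ‖φ‖ ^ 2 - ‖(PA * PB) φ‖ ^ 2 ≤
      4 * ((1 - PA).reApplyInnerSelf φ + (1 - PB).reApplyInnerSelf φ))
    (δ : ℝ) (hδ : δ = ‖(PA - P) * (PB - P)‖) :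
    ∀ φ : H, (1 - δ) / 4 * ((1 - P).reApplyInnerSelf φ) ≤
      (1 - PA).reApplyInnerSelf φ + (1 - PB).reApplyInnerSelf φ :=
  stmt_4_general PA PB P hPA hPAidem hPB hPBidem hP hPidem hA1 hB1 hB2 hconv δ hδ
end

section
/- Let L be a bounded operator and P an orthogonal projection on a Hilbert space with LP = PL = P and ‖L(1-P)‖ < 1. Then for every vector φ, ⟨φ,(1-P)φ⟩ ≤ (1 - ‖L(1-P)‖²)⁻¹ · (‖φ‖² - ‖Lφ‖²). -/
/-!
Write `Q = 1 - P`. Since `LP = P` and `PL = P`, we have `Lφ = Pφ + LQφ` with `LQφ ⊥ Pφ`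
(as `P(LQ) = PQ = 0`), so `‖Lφ‖² = ‖Pφ‖² + ‖LQφ‖² ≤ ‖Pφ‖² + ‖LQ‖²‖Qφ‖²`.
Subtracting this from `‖φ‖² = ‖Pφ‖² + ‖Qφ‖²` gives `(1 - ‖LQ‖²) ‖Qφ‖² ≤ ‖φ‖² - ‖Lφ‖²`,
and `⟨φ, Qφ⟩ = ‖Qφ‖²` because `Q` is again an orthogonal projection.
-/

namespace ContinuousLinearMap

theorem norm_mul_apply_le_of_isIdempotentElem {𝕜 E : Type*} [NontriviallyNormedField 𝕜]
    [SeminormedAddCommGroup E] [NormedSpace 𝕜 E] {Q : E →L[𝕜] E} (hQ : IsIdempotentElem Q)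
    (T : E →L[𝕜] E) (x : E) : ‖(T * Q) x‖ ≤ ‖T * Q‖ * ‖Q x‖ := by
  have hx : (T * Q) x = (T * Q) (Q x) := by
    rw [← mul_apply_eq_comp (T * Q), mul_assoc, hQ.eq]
  exact hx ▸ (T * Q).le_opNorm (Q x)

variable {𝕜 E : Type*} [RCLike 𝕜] [NormedAddCommGroup E] [InnerProductSpace 𝕜 E] [CompleteSpace E]
  {P : E →L[𝕜] E}

theorem inner_apply_eq_zero_of_apply_eq_zero (hP : IsSelfAdjoint P) (x : E) {y : E}
    (hy : P y = 0) : inner 𝕜 (P x) y = 0 := by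
  rw [← coe_coe, hP.isSymmetric x y, coe_coe, hy, inner_zero_right]

theorem norm_sq_apply_eq_of_mul_eq_self (hP : IsStarProjection P) {L : E →L[𝕜] E}
    (hLP : L * P = P) (hPL : P * L = P) (x : E) :
    ‖L x‖ ^ 2 = ‖P x‖ ^ 2 + ‖(L * (1 - P)) x‖ ^ 2 := by
  have hdecomp : L x = P x + (L * (1 - P)) x := by
    rw [mul_sub, mul_one, hLP, sub_apply, add_sub_cancel]
  have horth : P ((L * (1 - P)) x) = 0 := by
    rw [← mul_apply_eq_comp, ← mul_assoc, hPL, hP.isIdempotentElem.mul_one_sub_self, zero_apply]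
  rw [hdecomp, sq, sq, sq,
    norm_add_sq_eq_norm_sq_add_norm_sq_of_inner_eq_zero _ _
      (inner_apply_eq_zero_of_apply_eq_zero hP.isSelfAdjoint x horth)]

theorem _root_.IsStarProjection.norm_sq_apply_add_norm_sq_one_sub_apply (hP : IsStarProjection P)
    (x : E) : ‖P x‖ ^ 2 + ‖(1 - P) x‖ ^ 2 = ‖x‖ ^ 2 := by
  simpa [eq_comm] using norm_sq_apply_eq_of_mul_eq_self (L := 1) hP (one_mul P) (mul_one P) x

theorem _root_.IsStarProjection.reApplyInnerSelf_eq (hP : IsStarProjection P) (x : E) :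
    P.reApplyInnerSelf x = ‖P x‖ ^ 2 := by
  have hPP : P (P x) = P x := DFunLike.congr_fun hP.isIdempotentElem.eq x
  calc P.reApplyInnerSelf x = RCLike.re (inner 𝕜 (P (P x)) x) := by rw [reApplyInnerSelf_apply, hPP]
    _ = RCLike.re (inner 𝕜 (P x) (P x)) := congrArg _ (hP.isSelfAdjoint.isSymmetric (P x) x)
    _ = ‖P x‖ ^ 2 := inner_self_eq_norm_sq _

theorem one_sub_norm_sq_mul_reApplyInnerSelf_le (hP : IsStarProjection P) {L : E →L[𝕜] E}
    (hLP : L * P = P) (hPL : P * L = P) (x : E) :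
    (1 - ‖L * (1 - P)‖ ^ 2) * (1 - P).reApplyInnerSelf x ≤ ‖x‖ ^ 2 - ‖L x‖ ^ 2 := by
  rw [hP.one_sub.reApplyInnerSelf_eq, ← hP.norm_sq_apply_add_norm_sq_one_sub_apply x,
    norm_sq_apply_eq_of_mul_eq_self hP hLP hPL x]
  have hbound := pow_le_pow_left₀ (norm_nonneg _)
    (norm_mul_apply_le_of_isIdempotentElem hP.one_sub.isIdempotentElem L x) 2
  rw [mul_pow] at hbound
  linarith

end ContinuousLinearMap

theorem stmt_6_general {H : Type*} [NormedAddCommGroup H] [InnerProductSpace ℂ H] [CompleteSpace H]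
    (L P : H →L[ℂ] H)
    (hP : IsSelfAdjoint P) (hPidem : P * P = P)
    (h1 : L * P = P) (h2 : P * L = P)
    (hcontr : ‖L * (1 - P)‖ < 1) :
    ∀ φ : H, (1 - P).reApplyInnerSelf φ ≤
      (1 - ‖L * (1 - P)‖ ^ 2)⁻¹ * (‖φ‖ ^ 2 - ‖L φ‖ ^ 2) := by
  intro φ
  have hgap : 0 < 1 - ‖L * (1 - P)‖ ^ 2 :=
    sub_pos.2 (pow_lt_one₀ (norm_nonneg _) hcontr two_ne_zero)
  rw [le_inv_mul_iff₀ hgap]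
  exact ContinuousLinearMap.one_sub_norm_sq_mul_reApplyInnerSelf_le ⟨hPidem, hP⟩ h1 h2 φ

/-- For a contraction `L` and orthogonal projection `P` with `LP = PL = P`
and `‖L(1-P)‖ < 1`, for every `φ`,
`⟨φ,(1-P)φ⟩ ≤ (1 - ‖L(1-P)‖²)⁻¹ (‖φ‖² - ‖Lφ‖²)`. -/
theorem stmt_6 {H : Type*} [NormedAddCommGroup H] [InnerProductSpace ℂ H] [CompleteSpace H]
    (L P : H →L[ℂ] H) (hL : ‖L‖ ≤ 1)
    (hP : IsSelfAdjoint P) (hPidem : P * P = P)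
    (h1 : L * P = P) (h2 : P * L = P)
    (hcontr : ‖L * (1 - P)‖ < 1) :
    ∀ φ : H, (1 - P).reApplyInnerSelf φ ≤
      (1 - ‖L * (1 - P)‖ ^ 2)⁻¹ * (‖φ‖ ^ 2 - ‖L φ‖ ^ 2) :=
  stmt_6_general L P hP hPidem h1 h2 hcontr
end

section
/- Let H be a positive self-adjoint operator on a finite-dimensional Hilbert space with kernel projection P, and suppose λ⟨φ,(1-P)φ⟩ ≤ ⟨φ,Hφ⟩ for all φ and some λ > 0 (spectral gap inequality). Let L be a bounded operator with LP = PL = P, ‖L‖ ≤ 1, and suppose the detectability bound ⟨Lφ, H Lφ⟩ ≤ g²(‖φ‖² - ‖Lφ‖²) holds for all φ and some g > 0. Then ‖L(1-P)‖² ≤ 1/(1 + λ/g²). -/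
/-!
Let `ψ = (1 - P) φ`. Since `P L = P`, the vector `L ψ` again lies in `ker P`, so the gap
inequality at `L ψ` reads `λ ‖L ψ‖² ≤ ⟨L ψ, T L ψ⟩`, and the detectability bound turns this into
`λ ‖L ψ‖² ≤ g² (‖ψ‖² - ‖L ψ‖²)`, i.e. `‖L ψ‖² ≤ ‖ψ‖² / (1 + λ/g²)`. As `1 - P` is an orthogonal
projection, `‖ψ‖ ≤ ‖φ‖`.
-/

open ContinuousLinearMap

lemma le_one_div_one_add_div_mul_of_mul_le_mul_sub {a b lam g : ℝ} (hlam : 0 ≤ lam) (hg : g ≠ 0)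
    (h : lam * a ≤ g ^ 2 * (b - a)) : a ≤ 1 / (1 + lam / g ^ 2) * b := by
  have hg2 : 0 < g ^ 2 := by positivity
  have hsplit : a * (1 + lam / g ^ 2) = (g ^ 2 * a + lam * a) / g ^ 2 := by field_simp
  rw [one_div_mul_eq_div, le_div_iff₀ (by positivity), hsplit, div_le_iff₀ hg2]
  linarith

lemma ContinuousLinearMap.opNorm_sq_le_of_forall_norm_sq_le {𝕜 E F : Type*} [RCLike 𝕜]
    [SeminormedAddCommGroup E] [SeminormedAddCommGroup F] [NormedSpace 𝕜 E] [NormedSpace 𝕜 F]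
    (A : E →L[𝕜] F) {c : ℝ} (hc : 0 ≤ c) (h : ∀ x, ‖A x‖ ^ 2 ≤ c * ‖x‖ ^ 2) : ‖A‖ ^ 2 ≤ c := by
  have hA : ‖A‖ ≤ √c := A.opNorm_le_bound (Real.sqrt_nonneg c) fun x ↦ by
    rw [← pow_le_pow_iff_left₀ (norm_nonneg _) (by positivity) two_ne_zero, mul_pow,
      Real.sq_sqrt hc]
    exact h x
  simpa [Real.sq_sqrt hc] using pow_le_pow_left₀ (norm_nonneg A) hA 2

lemma ContinuousLinearMap.reApplyInnerSelf_one_sub_of_apply_eq_zero {𝕜 E : Type*} [RCLike 𝕜]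
    [SeminormedAddCommGroup E] [InnerProductSpace 𝕜 E] {P : E →L[𝕜] E} {x : E} (hx : P x = 0) :
    (1 - P).reApplyInnerSelf x = ‖x‖ ^ 2 := by
  simp [reApplyInnerSelf_apply, hx]

lemma norm_sq_apply_le_of_gap_of_detectability {𝕜 E : Type*} [RCLike 𝕜] [SeminormedAddCommGroup E]
    [InnerProductSpace 𝕜 E] {T P L : E →L[𝕜] E} {lam g : ℝ} (hlam : 0 ≤ lam) (hg : g ≠ 0)
    (hgap : ∀ φ, lam * (1 - P).reApplyInnerSelf φ ≤ T.reApplyInnerSelf φ)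
    (hdl : ∀ φ, T.reApplyInnerSelf (L φ) ≤ g ^ 2 * (‖φ‖ ^ 2 - ‖L φ‖ ^ 2))
    (hPL : P * L = P) {ψ : E} (hψ : P ψ = 0) :
    ‖L ψ‖ ^ 2 ≤ 1 / (1 + lam / g ^ 2) * ‖ψ‖ ^ 2 := by
  have hLψ : P (L ψ) = 0 := by rw [← mul_apply_eq_comp, hPL, hψ]
  refine le_one_div_one_add_div_mul_of_mul_le_mul_sub hlam hg ?_
  simpa [reApplyInnerSelf_one_sub_of_apply_eq_zero hLψ] using (hgap (L ψ)).trans (hdl ψ)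

theorem stmt_7_general {H : Type*} [NormedAddCommGroup H] [InnerProductSpace ℂ H]
    [FiniteDimensional ℂ H]
    (T : H →L[ℂ] H)
    (P : H →L[ℂ] H) (hP : IsSelfAdjoint P) (hPidem : P * P = P)
    (lam : ℝ) (hlam : 0 < lam)
    (hgap : ∀ φ : H, lam * ((1 - P).reApplyInnerSelf φ) ≤ T.reApplyInnerSelf φ)
    (L : H →L[ℂ] H) (h2 : P * L = P)
    (g : ℝ) (hg : 0 < g)
    (hdl : ∀ φ : H, T.reApplyInnerSelf (L φ) ≤ g ^ 2 * (‖φ‖ ^ 2 - ‖L φ‖ ^ 2)) :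
    ‖L * (1 - P)‖ ^ 2 ≤ 1 / (1 + lam / g ^ 2) := by
  have hproj : IsStarProjection P := ⟨hPidem, hP⟩
  refine (L * (1 - P)).opNorm_sq_le_of_forall_norm_sq_le (by positivity) fun φ ↦ ?_
  have hψ : P ((1 - P) φ) = 0 := by rw [← mul_apply_eq_comp, hproj.mul_one_sub_self, zero_apply]
  have hψφ : ‖(1 - P) φ‖ ≤ ‖φ‖ :=
    ((1 - P).le_opNorm φ).trans (mul_le_of_le_one_left (norm_nonneg φ) hproj.one_sub.norm_le)
  calc ‖(L * (1 - P)) φ‖ ^ 2 = ‖L ((1 - P) φ)‖ ^ 2 := rfl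
    _ ≤ 1 / (1 + lam / g ^ 2) * ‖(1 - P) φ‖ ^ 2 :=
      norm_sq_apply_le_of_gap_of_detectability hlam.le hg.ne' hgap hdl h2 hψ
    _ ≤ 1 / (1 + lam / g ^ 2) * ‖φ‖ ^ 2 := by gcongr

/-- Detectability Lemma corollary: finite-dimensional setting, `T ≥ 0`
self-adjoint with kernel projection `P`, spectral gap `λ`, `L` a contraction with
`LP = PL = P` satisfying the detectability bound `⟨Lφ,T Lφ⟩ ≤ g²(‖φ‖²-‖Lφ‖²)`.
Then `‖L(1-P)‖² ≤ 1/(1+λ/g²)`. -/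
theorem stmt_7 {H : Type*} [NormedAddCommGroup H] [InnerProductSpace ℂ H]
    [FiniteDimensional ℂ H]
    (T : H →L[ℂ] H) (hT : T.IsPositive)
    (P : H →L[ℂ] H) (hP : IsSelfAdjoint P) (hPidem : P * P = P)
    (hker : LinearMap.ker (T : H →ₗ[ℂ] H) = LinearMap.range (P : H →ₗ[ℂ] H))
    (lam : ℝ) (hlam : 0 < lam)
    (hgap : ∀ φ : H, lam * ((1 - P).reApplyInnerSelf φ) ≤ T.reApplyInnerSelf φ)
    (L : H →L[ℂ] H) (hL : ‖L‖ ≤ 1) (h1 : L * P = P) (h2 : P * L = P)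
    (g : ℝ) (hg : 0 < g)
    (hdl : ∀ φ : H, T.reApplyInnerSelf (L φ) ≤ g ^ 2 * (‖φ‖ ^ 2 - ‖L φ‖ ^ 2)) :
    ‖L * (1 - P)‖ ^ 2 ≤ 1 / (1 + lam / g ^ 2) :=
  stmt_7_general T P hP hPidem lam hlam hgap L h2 g hg hdl
end

section
/- Let H be a positive self-adjoint operator on a finite-dimensional Hilbert space with ground state (kernel) projection P, and let L be a contraction with LP = PL = P such that ‖L(1-P)‖ < 1, satisfying: (i) the converse detectability inequality ‖φ‖² - ‖Lφ‖² ≤ 4⟨φ,Hφ⟩ for all φ, and (ii) the energy contraction ⟨Lφ, H Lφ⟩ ≤ γ⟨φ,Hφ⟩ for all φ and some 0 < γ < 1. Then H has spectral gap at least (1-γ)/4, i.e., ((1-γ)/4)·⟨φ,(1-P)φ⟩ ≤ ⟨φ,Hφ⟩ for all φ. -/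
/-!
Write `E φ = ⟪φ, Hφ⟫`. Along the orbit `Lᵏφ` the energy decays geometrically, `E (Lᵏφ) ≤ γᵏ E φ`,
so by converse detectability the squared norm drops by at most `4 γᵏ E φ` at step `k`.
Summing the telescoping series, and using `Lⁿ → P` (indeed `Lⁿ⁺¹ = P + (L(1-P))ⁿ⁺¹`),
gives `‖φ‖² - ‖Pφ‖² ≤ 4 E φ / (1 - γ)`, and `‖φ‖² - ‖Pφ‖² = ⟪φ, (1-P)φ⟫`.
-/

open Filter Topology ContinuousLinearMap

theorem pow_succ_eq_add_mul_one_sub_pow {R : Type*} [Ring R] {L P : R} (hP : IsIdempotentElem P)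
    (hLP : L * P = P) (hPL : P * L = P) (n : ℕ) :
    L ^ (n + 1) = P + (L * (1 - P)) ^ (n + 1) := by
  induction n with
  | zero => simp [mul_sub, hLP]
  | succ n ih =>
    have hkill : (L * (1 - P)) ^ (n + 1) * P = 0 := by
      rw [pow_succ, mul_assoc, mul_assoc, hP.one_sub_mul_self, mul_zero, mul_zero]
    calc L ^ (n + 1 + 1) = P * L + (L * (1 - P)) ^ (n + 1) * (L * (1 - P) + L * P) := by
          rw [pow_succ, ih, add_mul, ← mul_add, sub_add_cancel, mul_one]
      _ = P + (L * (1 - P)) ^ (n + 1 + 1) := by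
          rw [hPL, mul_add, hLP, hkill, add_zero, ← pow_succ]

theorem tendsto_pow_of_norm_mul_one_sub_lt_one {R : Type*} [NormedRing R] {L P : R}
    (hP : IsIdempotentElem P) (hLP : L * P = P) (hPL : P * L = P) (h : ‖L * (1 - P)‖ < 1) :
    Tendsto (L ^ ·) atTop (𝓝 P) := by
  rw [← tendsto_add_atTop_iff_nat 1]
  simp_rw [pow_succ_eq_add_mul_one_sub_pow hP hLP hPL]
  simpa using tendsto_const_nhds.add
    ((tendsto_pow_atTop_nhds_zero_of_norm_lt_one h).comp (tendsto_add_atTop_nat 1))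

theorem sub_le_of_tendsto_of_sub_succ_le_geometric {a : ℕ → ℝ} {A C γ : ℝ}
    (ha : Tendsto a atTop (𝓝 A)) (hγ0 : 0 ≤ γ) (hγ1 : γ < 1)
    (hstep : ∀ k, a k - a (k + 1) ≤ C * γ ^ k) :
    a 0 - A ≤ C / (1 - γ) := by
  have hpartial : ∀ n, a 0 - a n ≤ ∑ k ∈ Finset.range n, C * γ ^ k := fun n => by
    rw [← Finset.sum_range_sub']
    exact Finset.sum_le_sum fun k _ => hstep k
  exact le_of_tendsto_of_tendsto' (tendsto_const_nhds.sub ha)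
    ((hasSum_geometric_of_lt_one hγ0 hγ1).mul_left C).tendsto_sum_nat hpartial

theorem reApplyInnerSelf_one_sub_of_isStarProjection {𝕜 E : Type*} [RCLike 𝕜]
    [NormedAddCommGroup E] [InnerProductSpace 𝕜 E] [CompleteSpace E] {P : E →L[𝕜] E}
    (hP : IsStarProjection P) (x : E) : (1 - P).reApplyInnerSelf x = ‖x‖ ^ 2 - ‖P x‖ ^ 2 := by
  have hPx : inner 𝕜 (P x) x = inner 𝕜 (P x) (P x) := by
    calc inner 𝕜 (P x) x = inner 𝕜 (P (P x)) x := by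
          rw [← mul_apply_eq_comp, hP.isIdempotentElem.eq]
      _ = inner 𝕜 (P x) (P x) := hP.isSelfAdjoint.isSymmetric (P x) x
  rw [reApplyInnerSelf_apply, sub_apply, one_apply_eq_self, inner_sub_left, map_sub, hPx,
    inner_self_eq_norm_sq, inner_self_eq_norm_sq]

theorem stmt_8_general {H : Type*} [NormedAddCommGroup H] [InnerProductSpace ℂ H]
    [FiniteDimensional ℂ H]
    (T : H →L[ℂ] H)
    (P : H →L[ℂ] H) (hP : IsSelfAdjoint P) (hPidem : P * P = P)
    (L : H →L[ℂ] H) (h1 : L * P = P) (h2 : P * L = P)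
    (hcontr : ‖L * (1 - P)‖ < 1)
    (hconv : ∀ φ : H, ‖φ‖ ^ 2 - ‖L φ‖ ^ 2 ≤ 4 * T.reApplyInnerSelf φ)
    (γ : ℝ) (hγ0 : 0 < γ) (hγ1 : γ < 1)
    (hcontraction : ∀ φ : H, T.reApplyInnerSelf (L φ) ≤ γ * T.reApplyInnerSelf φ) :
    ∀ φ : H, (1 - γ) / 4 * ((1 - P).reApplyInnerSelf φ) ≤ T.reApplyInnerSelf φ := by
  intro φ
  set E := T.reApplyInnerSelf
  have hdecay : ∀ k, E ((L ^ k) φ) ≤ γ ^ k * E φ := fun k =>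
    le_geom (u := fun k => E ((L ^ k) φ)) hγ0.le k fun j _ => by
      simpa only [pow_succ', mul_apply_eq_comp] using hcontraction ((L ^ j) φ)
  have hstep : ∀ k, ‖(L ^ k) φ‖ ^ 2 - ‖(L ^ (k + 1)) φ‖ ^ 2 ≤ 4 * E φ * γ ^ k := fun k => by
    rw [pow_succ' L k, mul_apply_eq_comp]
    linarith [hconv ((L ^ k) φ), hdecay k]
  have hlim : Tendsto (fun k => ‖(L ^ k) φ‖ ^ 2) atTop (𝓝 (‖P φ‖ ^ 2)) :=
    (((apply ℂ H φ).continuous.tendsto P).comp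
      (tendsto_pow_of_norm_mul_one_sub_lt_one hPidem h1 h2 hcontr)).norm.pow 2
  have hgap := sub_le_of_tendsto_of_sub_succ_le_geometric hlim hγ0.le hγ1 hstep
  rw [pow_zero, one_apply_eq_self, le_div_iff₀ (sub_pos.2 hγ1)] at hgap
  rw [reApplyInnerSelf_one_sub_of_isStarProjection ⟨hPidem, hP⟩]
  linarith

/-- Theorem: energy contraction implies gap: finite-dimensional setting,
`T ≥ 0` self-adjoint with kernel projection `P`, `L` a contraction with `LP = PL = P`,
`‖L(1-P)‖ < 1`, converse detectability `‖φ‖² - ‖Lφ‖² ≤ 4⟨φ,Tφ⟩`, and energy contraction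
`⟨Lφ,T Lφ⟩ ≤ γ⟨φ,Tφ⟩` with `0 < γ < 1`. Then `((1-γ)/4)⟨φ,(1-P)φ⟩ ≤ ⟨φ,Tφ⟩` for all `φ`. -/
theorem stmt_8 {H : Type*} [NormedAddCommGroup H] [InnerProductSpace ℂ H]
    [FiniteDimensional ℂ H]
    (T : H →L[ℂ] H) (hT : T.IsPositive)
    (P : H →L[ℂ] H) (hP : IsSelfAdjoint P) (hPidem : P * P = P)
    (hker : LinearMap.ker (T : H →ₗ[ℂ] H) = LinearMap.range (P : H →ₗ[ℂ] H))
    (L : H →L[ℂ] H) (hL : ‖L‖ ≤ 1) (h1 : L * P = P) (h2 : P * L = P)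
    (hcontr : ‖L * (1 - P)‖ < 1)
    (hconv : ∀ φ : H, ‖φ‖ ^ 2 - ‖L φ‖ ^ 2 ≤ 4 * T.reApplyInnerSelf φ)
    (γ : ℝ) (hγ0 : 0 < γ) (hγ1 : γ < 1)
    (hcontraction : ∀ φ : H, T.reApplyInnerSelf (L φ) ≤ γ * T.reApplyInnerSelf φ) :
    ∀ φ : H, (1 - γ) / 4 * ((1 - P).reApplyInnerSelf φ) ≤ T.reApplyInnerSelf φ :=
  stmt_8_general T P hP hPidem L h1 h2 hcontr hconv γ hγ0 hγ1 hcontraction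
end
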